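/- arXiv:math-ph/0306058 — 6 statements merged into one kernel-verified Lean document; each statement's English description precedes it below -/
import Mathlib

section
/- For every homogeneous ω ∈ Ω^r one has Δ(Δ(ω)) = −(ζω − ωζ), i.e. Δ² equals minus the commutator with the 2-form ζ := dϑ − ϑ². -/
/-!
Write `Δ = ad ϑ - d` on homogeneous forms, where `ad ϑ ω = ϑω - (-1)^r ωϑ` is the graded
commutator with the odd element `ϑ`. Since `ϑ` is odd, `ad ϑ ∘ ad ϑ = [ϑ², -]`, and the Leibniz
rule gives `d ∘ ad ϑ = [dϑ, -] - ad ϑ ∘ d`. Expanding `(ad ϑ - d)²` with `d² = 0`, the mixed terms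
cancel and `Δ² = [ϑ², -] - [dϑ, -] = -[ζ, -]`.
-/

section GradedCommutator

variable (k : Type*) {Ω : Type*} [CommRing k] [Ring Ω] [Algebra k Ω]

/-- The graded commutator `[a, b]` of an odd element `a` with an element `b` of degree `r`. -/
def oddGradedCommutator (r : ℕ) (a b : Ω) : Ω := a * b - ((-1 : k) ^ r) • (b * a)

variable {k}

lemma oddGradedCommutator_sub_right (r : ℕ) (a b c : Ω) :
    oddGradedCommutator k r a (b - c) =
      oddGradedCommutator k r a b - oddGradedCommutator k r a c := by
  simp only [oddGradedCommutator, mul_sub, sub_mul, smul_sub]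
  abel

lemma oddGradedCommutator_succ_oddGradedCommutator (r : ℕ) (a b : Ω) :
    oddGradedCommutator k (r + 1) a (oddGradedCommutator k r a b) = a ^ 2 * b - b * a ^ 2 := by
  have hsq : ((-1 : k) ^ r) * (-1) ^ r = 1 := by rw [← mul_pow]; norm_num
  have hsucc : (-1 : k) ^ (r + 1) = -(-1) ^ r := by ring
  simp only [oddGradedCommutator, hsucc, sq, mul_sub, sub_mul, mul_smul_comm,
    smul_mul_assoc, smul_sub, smul_smul, neg_smul, neg_mul, hsq, one_smul, mul_assoc]
  abel

lemma oddGradedCommutator_mem {𝒜 : ℕ → Submodule k Ω} [SetLike.GradedMonoid 𝒜]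
    {r : ℕ} {a b : Ω} (ha : a ∈ 𝒜 1) (hb : b ∈ 𝒜 r) :
    oddGradedCommutator k r a b ∈ 𝒜 (r + 1) := by
  refine sub_mem ?_ (Submodule.smul_mem _ _ (SetLike.mul_mem_graded hb ha))
  rw [add_comm]
  exact SetLike.mul_mem_graded ha hb

lemma map_oddGradedCommutator {𝒜 : ℕ → Submodule k Ω} (d : Ω →ₗ[k] Ω)
    (hLeibniz : ∀ (r : ℕ), ∀ ω ∈ 𝒜 r, ∀ ω' : Ω,
      d (ω * ω') = d ω * ω' + ((-1 : k) ^ r) • (ω * d ω'))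
    {r : ℕ} {a b : Ω} (ha : a ∈ 𝒜 1) (hb : b ∈ 𝒜 r) :
    d (oddGradedCommutator k r a b) =
      (d a * b - b * d a) - oddGradedCommutator k (r + 1) a (d b) := by
  have hsq : ((-1 : k) ^ r) * (-1) ^ r = 1 := by rw [← mul_pow]; norm_num
  have hsucc : (-1 : k) ^ (r + 1) = -(-1) ^ r := by ring
  simp only [oddGradedCommutator, map_sub, map_smul, hLeibniz 1 a ha, hLeibniz r b hb, pow_one,
    hsucc, neg_smul, smul_add, smul_smul, hsq, one_smul]
  abel

end GradedCommutator

theorem stmt_3_general {k Ω : Type*} [Field k] [Ring Ω] [Algebra k Ω]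
    (𝒜 : ℕ → Submodule k Ω) [GradedAlgebra 𝒜]
    (d : Ω →ₗ[k] Ω)
    (hd_map : ∀ (r : ℕ), ∀ ω ∈ 𝒜 r, d ω ∈ 𝒜 (r + 1))
    (hd2 : ∀ ω : Ω, d (d ω) = 0)
    (hLeibniz : ∀ (r : ℕ), ∀ ω ∈ 𝒜 r, ∀ ω' : Ω,
      d (ω * ω') = d ω * ω' + ((-1 : k) ^ r) • (ω * d ω'))
    (ϑ : Ω) (hϑ : ϑ ∈ 𝒜 1)
    (Δ : Ω →ₗ[k] Ω)
    (hΔ : ∀ (r : ℕ), ∀ ω ∈ 𝒜 r, Δ ω = ϑ * ω - ((-1 : k) ^ r) • (ω * ϑ) - d ω)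
    (r : ℕ) (ω : Ω) (hω : ω ∈ 𝒜 r) :
    Δ (Δ ω) = -((d ϑ - ϑ ^ 2) * ω - ω * (d ϑ - ϑ ^ 2)) := by
  have hΔ' : ∀ (r : ℕ), ∀ ω ∈ 𝒜 r, Δ ω = oddGradedCommutator k r ϑ ω - d ω := hΔ
  have hΔω_mem : Δ ω ∈ 𝒜 (r + 1) := by
    rw [hΔ' r ω hω]
    exact sub_mem (oddGradedCommutator_mem hϑ hω) (hd_map r ω hω)
  rw [hΔ' (r + 1) _ hΔω_mem, hΔ' r ω hω, oddGradedCommutator_sub_right,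
    oddGradedCommutator_succ_oddGradedCommutator, map_sub, hd2, sub_zero,
    map_oddGradedCommutator d hLeibniz hϑ hω]
  noncomm_ring

/-- For homogeneous ω ∈ Ω^r, Δ(Δ(ω)) = −(ζω − ωζ) with ζ := dϑ − ϑ². -/
theorem stmt_3 {k Ω : Type*} [Field k] [CharZero k] [Ring Ω] [Algebra k Ω]
    (𝒜 : ℕ → Submodule k Ω) [GradedAlgebra 𝒜]
    (d : Ω →ₗ[k] Ω)
    (hd_map : ∀ (r : ℕ), ∀ ω ∈ 𝒜 r, d ω ∈ 𝒜 (r + 1))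
    (hd2 : ∀ ω : Ω, d (d ω) = 0)
    (hLeibniz : ∀ (r : ℕ), ∀ ω ∈ 𝒜 r, ∀ ω' : Ω,
      d (ω * ω') = d ω * ω' + ((-1 : k) ^ r) • (ω * d ω'))
    (ϑ : Ω) (hϑ : ϑ ∈ 𝒜 1)
    (hinner : ∀ f ∈ 𝒜 0, d f = ϑ * f - f * ϑ)
    (Δ : Ω →ₗ[k] Ω)
    (hΔ : ∀ (r : ℕ), ∀ ω ∈ 𝒜 r, Δ ω = ϑ * ω - ((-1 : k) ^ r) • (ω * ϑ) - d ω)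
    (r : ℕ) (ω : Ω) (hω : ω ∈ 𝒜 r) :
    Δ (Δ ω) = -((d ϑ - ϑ ^ 2) * ω - ω * (d ϑ - ϑ ^ 2)) :=
  stmt_3_general 𝒜 d hd_map hd2 hLeibniz ϑ hϑ Δ hΔ r ω hω
end

section
/- Δ∘Δ = 0 on Ω if and only if the 2-form ζ := dϑ − ϑ² lies in the center of Ω, i.e. ζω = ωζ for all ω ∈ Ω. -/
/-- Δ∘Δ = 0 on Ω if and only if ζ := dϑ − ϑ² lies in the center of Ω. -/
theorem stmt_4 {k Ω : Type*} [Field k] [CharZero k] [Ring Ω] [Algebra k Ω]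
    (𝒜 : ℕ → Submodule k Ω) [GradedAlgebra 𝒜]
    (d : Ω →ₗ[k] Ω)
    (hd_map : ∀ (r : ℕ), ∀ ω ∈ 𝒜 r, d ω ∈ 𝒜 (r + 1))
    (hd2 : ∀ ω : Ω, d (d ω) = 0)
    (hLeibniz : ∀ (r : ℕ), ∀ ω ∈ 𝒜 r, ∀ ω' : Ω,
      d (ω * ω') = d ω * ω' + ((-1 : k) ^ r) • (ω * d ω'))
    (ϑ : Ω) (hϑ : ϑ ∈ 𝒜 1)
    (hinner : ∀ f ∈ 𝒜 0, d f = ϑ * f - f * ϑ)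
    (Δ : Ω →ₗ[k] Ω)
    (hΔ : ∀ (r : ℕ), ∀ ω ∈ 𝒜 r, Δ ω = ϑ * ω - ((-1 : k) ^ r) • (ω * ϑ) - d ω) :
    (∀ ω : Ω, Δ (Δ ω) = 0) ↔
      (∀ ω : Ω, (d ϑ - ϑ ^ 2) * ω = ω * (d ϑ - ϑ ^ 2)) := by
  have key : ∀ (r : ℕ), ∀ ω ∈ 𝒜 r,
      Δ (Δ ω) = ω * (d ϑ - ϑ ^ 2) - (d ϑ - ϑ ^ 2) * ω := by
    intro r ω hω
    have hΔω : Δ ω ∈ 𝒜 (r + 1) := by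
      rw [hΔ r ω hω]
      have h1 : ϑ * ω ∈ 𝒜 (r + 1) := by
        have := SetLike.mul_mem_graded hϑ hω
        rwa [add_comm] at this
      have h2 : ω * ϑ ∈ 𝒜 (r + 1) := SetLike.mul_mem_graded hω hϑ
      exact Submodule.sub_mem _ (Submodule.sub_mem _ h1 (Submodule.smul_mem _ _ h2))
        (hd_map r ω hω)
    have e1 : Δ ω = ϑ * ω - ((-1 : k) ^ r) • (ω * ϑ) - d ω := hΔ r ω hω
    have e2 : Δ (Δ ω) = ϑ * Δ ω - ((-1 : k) ^ (r + 1)) • (Δ ω * ϑ) - d (Δ ω) :=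
      hΔ (r + 1) _ hΔω
    have hdϑω : d (ϑ * ω) = d ϑ * ω + ((-1 : k) ^ 1) • (ϑ * d ω) := hLeibniz 1 ϑ hϑ ω
    have hdωϑ : d (ω * ϑ) = d ω * ϑ + ((-1 : k) ^ r) • (ω * d ϑ) := hLeibniz r ω hω ϑ
    have hdd : d (d ω) = 0 := hd2 ω
    have hdΔ : d (Δ ω) = (d ϑ * ω + ((-1 : k) ^ 1) • (ϑ * d ω))
        - ((-1 : k) ^ r) • (d ω * ϑ + ((-1 : k) ^ r) • (ω * d ϑ)) := by
      rw [e1, map_sub, map_sub, map_smul, hdϑω, hdωϑ, hdd, sub_zero]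
    rw [e2, hdΔ, e1]
    rcases Nat.even_or_odd r with hr | hr
    · rw [hr.neg_one_pow, (hr.add_one).neg_one_pow]
      simp only [pow_one, one_smul, neg_one_smul]
      noncomm_ring
    · rw [hr.neg_one_pow, (hr.add_one).neg_one_pow]
      simp only [pow_one, one_smul, neg_one_smul]
      noncomm_ring
  constructor
  · intro h ω
    induction ω using DirectSum.Decomposition.inductionOn 𝒜 with
    | zero => simp
    | homogeneous m =>
        rename_i x
        exact (sub_eq_zero.mp (((key x m m.2).symm.trans (h m)))).symm
    | add a b ha hb =>
        rw [mul_add, add_mul, ha, hb]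
  · intro h ω
    induction ω using DirectSum.Decomposition.inductionOn 𝒜 with
    | zero => simp
    | homogeneous m =>
        rename_i x
        rw [key x m m.2, h, sub_self]
    | add a b ha hb =>
        rw [map_add, map_add, ha, hb, add_zero]
end

section
/- If the first order calculus is inner and simple, and φ is a differentiable graded automorphism, then φ∘Δ = Δ∘φ, where Δ(ω) := ϑω − (−1)^r ωϑ − dω for homogeneous ω ∈ Ω^r, extended k-linearly. -/
/-- If the first order calculus is inner and simple, and φ is a differentiable graded
    automorphism, then φ∘Δ = Δ∘φ. -/
theorem stmt_7 {k Ω : Type*} [Field k] [CharZero k] [Ring Ω] [Algebra k Ω]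
    (𝒜 : ℕ → Submodule k Ω) [GradedAlgebra 𝒜]
    (d : Ω →ₗ[k] Ω)
    (hd_map : ∀ (r : ℕ), ∀ ω ∈ 𝒜 r, d ω ∈ 𝒜 (r + 1))
    (hLeibniz : ∀ (r : ℕ), ∀ ω ∈ 𝒜 r, ∀ ω' : Ω,
      d (ω * ω') = d ω * ω' + ((-1 : k) ^ r) • (ω * d ω'))
    (ϑ : Ω) (hϑ : ϑ ∈ 𝒜 1)
    (hinner : ∀ f ∈ 𝒜 0, d f = ϑ * f - f * ϑ)
    (hsimple : ∀ α ∈ 𝒜 1, (∀ f ∈ 𝒜 0, α * f = f * α) → α = 0)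
    (Δ : Ω →ₗ[k] Ω)
    (hΔ : ∀ (r : ℕ), ∀ ω ∈ 𝒜 r, Δ ω = ϑ * ω - ((-1 : k) ^ r) • (ω * ϑ) - d ω)
    (φ : Ω ≃ₐ[k] Ω)
    (hφgr : ∀ r : ℕ, (𝒜 r).map φ.toLinearMap = 𝒜 r)
    (hφd : ∀ ω : Ω, φ (d ω) = d (φ ω)) :
    ∀ ω : Ω, φ (Δ ω) = Δ (φ ω) := by
  -- φ maps each graded piece into itself
  have hφmem : ∀ r : ℕ, ∀ ω ∈ 𝒜 r, φ ω ∈ 𝒜 r := by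
    intro r ω hω
    rw [← hφgr r]
    exact ⟨ω, hω, rfl⟩
  -- φ ϑ = ϑ
  have hφϑ : φ ϑ = ϑ := by
    have hα : φ ϑ - ϑ ∈ 𝒜 1 := sub_mem (hφmem 1 ϑ hϑ) hϑ
    have hcomm : ∀ f ∈ 𝒜 0, (φ ϑ - ϑ) * f = f * (φ ϑ - ϑ) := by
      intro f hf
      have hmem : f ∈ (𝒜 0).map φ.toLinearMap := by rw [hφgr 0]; exact hf
      obtain ⟨g, hg, rfl⟩ := hmem
      simp only [AlgEquiv.toLinearMap_apply]
      have h1 : d (φ g) = φ ϑ * φ g - φ g * φ ϑ := by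
        rw [← hφd g, hinner g hg, map_sub, map_mul, map_mul]
      have h2 : d (φ g) = ϑ * φ g - φ g * ϑ := hinner _ (hφmem 0 g hg)
      have h3 := h1.symm.trans h2
      rw [sub_mul, mul_sub]
      exact sub_eq_sub_iff_sub_eq_sub.mp h3
    exact sub_eq_zero.mp (hsimple _ hα hcomm)
  -- homogeneous case
  have hhom : ∀ (r : ℕ), ∀ ω ∈ 𝒜 r, φ (Δ ω) = Δ (φ ω) := by
    intro r ω hω
    rw [hΔ r ω hω, hΔ r (φ ω) (hφmem r ω hω)]
    rw [map_sub, map_sub, map_mul, map_smul, map_mul, hφϑ, hφd]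
  -- extend by linearity using the grading
  intro ω
  induction ω using DirectSum.Decomposition.inductionOn 𝒜 with
  | zero => simp
  | homogeneous x =>
    exact hhom _ x x.2
  | add x y hx hy => rw [map_add, map_add, map_add, hx, hy, map_add]
end

section
/- If the first order calculus is inner (but not necessarily simple) and φ is a differentiable graded automorphism, then the 1-form ϑ_φ := φ(ϑ) − ϑ commutes with every element of Ω^0, and for every homogeneous ω ∈ Ω^r one has φ(Δ(ω)) = Δ(φ(ω)) + [ϑ_φ, φ(ω)], where [ϑ_φ, η] := ϑ_φ η − (−1)^r η ϑ_φ for η ∈ Ω^r. -/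
theorem commute_sub_of_mul_sub_mul_eq {R : Type*} [Ring R] {a b x : R}
    (h : a * x - x * a = b * x - x * b) : Commute (a - b) x := by
  have h' : a * x = b * x - x * b + x * a := eq_add_of_sub_eq h
  rw [Commute, SemiconjBy, sub_mul, mul_sub, h']
  abel

theorem commute_map_sub_of_inner {R : Type*} [Ring R] (φ : R →+* R) (d : R → R) {ϑ g : R}
    (hφd : φ (d g) = d (φ g)) (hg : d g = ϑ * g - g * ϑ)
    (hφg : d (φ g) = ϑ * φ g - φ g * ϑ) : Commute (φ ϑ - ϑ) (φ g) := by
  apply commute_sub_of_mul_sub_mul_eq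
  rw [← hφg, ← hφd, hg, map_sub, map_mul, map_mul]

theorem map_mul_sub_smul_mul_sub {k Ω : Type*} [CommRing k] [Ring Ω] [Algebra k Ω]
    (φ : Ω →ₐ[k] Ω) (d : Ω → Ω) (s : k) {ϑ ω : Ω} (hφd : φ (d ω) = d (φ ω)) :
    φ (ϑ * ω - s • (ω * ϑ) - d ω) =
      (ϑ * φ ω - s • (φ ω * ϑ) - d (φ ω)) + ((φ ϑ - ϑ) * φ ω - s • (φ ω * (φ ϑ - ϑ))) := by
  rw [map_sub, map_sub, map_mul, map_smul, map_mul, hφd, sub_mul, mul_sub, smul_sub]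
  abel

theorem stmt_8_general {k Ω : Type*} [Field k] [Ring Ω] [Algebra k Ω]
    (𝒜 : ℕ → Submodule k Ω)
    (d : Ω →ₗ[k] Ω)
    (ϑ : Ω)
    (hinner : ∀ f ∈ 𝒜 0, d f = ϑ * f - f * ϑ)
    (Δ : Ω →ₗ[k] Ω)
    (hΔ : ∀ (r : ℕ), ∀ ω ∈ 𝒜 r, Δ ω = ϑ * ω - ((-1 : k) ^ r) • (ω * ϑ) - d ω)
    (φ : Ω ≃ₐ[k] Ω)
    (hφgr : ∀ r : ℕ, (𝒜 r).map φ.toLinearMap = 𝒜 r)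
    (hφd : ∀ ω : Ω, φ (d ω) = d (φ ω)) :
    (∀ f ∈ 𝒜 0, (φ ϑ - ϑ) * f = f * (φ ϑ - ϑ)) ∧
      (∀ (r : ℕ), ∀ ω ∈ 𝒜 r,
        φ (Δ ω) = Δ (φ ω) +
          ((φ ϑ - ϑ) * φ ω - ((-1 : k) ^ r) • (φ ω * (φ ϑ - ϑ)))) := by
  have hφmem : ∀ r, ∀ ω ∈ 𝒜 r, φ ω ∈ 𝒜 r := fun r ω hω =>
    hφgr r ▸ Submodule.mem_map_of_mem hω
  refine ⟨fun f hf => ?_, fun r ω hω => ?_⟩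
  · obtain ⟨g, hg, rfl⟩ := (hφgr 0).symm ▸ hf
    exact commute_map_sub_of_inner (φ : Ω →+* Ω) d (hφd g) (hinner g hg)
      (hinner _ (hφmem 0 g hg))
  · rw [hΔ r ω hω, hΔ r (φ ω) (hφmem r ω hω)]
    exact map_mul_sub_smul_mul_sub (φ : Ω →ₐ[k] Ω) d _ (hφd ω)

/-- If the calculus is inner (not necessarily simple) and φ is a differentiable graded
    automorphism, then ϑ_φ := φ(ϑ) − ϑ commutes with Ω^0 and
    φ(Δ(ω)) = Δ(φ(ω)) + [ϑ_φ, φ(ω)] for homogeneous ω. -/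
theorem stmt_8 {k Ω : Type*} [Field k] [CharZero k] [Ring Ω] [Algebra k Ω]
    (𝒜 : ℕ → Submodule k Ω) [GradedAlgebra 𝒜]
    (d : Ω →ₗ[k] Ω)
    (hd_map : ∀ (r : ℕ), ∀ ω ∈ 𝒜 r, d ω ∈ 𝒜 (r + 1))
    (hLeibniz : ∀ (r : ℕ), ∀ ω ∈ 𝒜 r, ∀ ω' : Ω,
      d (ω * ω') = d ω * ω' + ((-1 : k) ^ r) • (ω * d ω'))
    (ϑ : Ω) (hϑ : ϑ ∈ 𝒜 1)
    (hinner : ∀ f ∈ 𝒜 0, d f = ϑ * f - f * ϑ)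
    (Δ : Ω →ₗ[k] Ω)
    (hΔ : ∀ (r : ℕ), ∀ ω ∈ 𝒜 r, Δ ω = ϑ * ω - ((-1 : k) ^ r) • (ω * ϑ) - d ω)
    (φ : Ω ≃ₐ[k] Ω)
    (hφgr : ∀ r : ℕ, (𝒜 r).map φ.toLinearMap = 𝒜 r)
    (hφd : ∀ ω : Ω, φ (d ω) = d (φ ω)) :
    (∀ f ∈ 𝒜 0, (φ ϑ - ϑ) * f = f * (φ ϑ - ϑ)) ∧
      (∀ (r : ℕ), ∀ ω ∈ 𝒜 r,
        φ (Δ ω) = Δ (φ ω) +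
          ((φ ϑ - ϑ) * φ ω - ((-1 : k) ^ r) • (φ ω * (φ ϑ - ϑ)))) :=
  stmt_8_general 𝒜 d ϑ hinner Δ hΔ φ hφgr hφd
end

section
/- For n ≥ 1 and complex numbers i_1, …, i_n, the n×n matrix M over the polynomial ring ℂ[x] with entries M_{r,k} = (x + i_k)^r − x^r (for 1 ≤ r, k ≤ n) has determinant equal to the constant polynomial i_1 i_2 ⋯ i_n · ∏_{1 ≤ k < l ≤ n} (i_l − i_k). In particular, det M does not depend on x. -/
/-!
Expanding `(x + a)^(r+1) - x^(r+1)` by the binomial theorem factors the matrix as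
`B * W`, where `B r s = C(r+1, s+1) x^(r-s)` is lower unitriangular and
`W s c = a_c^(s+1)` is the transpose of `diag(a) * vandermonde(a)`.
Hence the determinant is `det W = (∏ a_c) * ∏_{k<l} (a_l - a_k)`, with no `x` left.
-/

open Polynomial Matrix Finset

section

variable {R : Type*} [CommRing R]

theorem add_pow_succ_sub_pow_succ (x a : R) (r : ℕ) :
    (x + a) ^ (r + 1) - x ^ (r + 1) =
      ∑ s ∈ range (r + 1), ((r + 1).choose (s + 1) : R) * x ^ (r - s) * a ^ (s + 1) := by
  rw [add_comm x, add_pow, sum_range_succ', sub_eq_iff_eq_add]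
  simp only [Nat.add_sub_add_right, pow_zero, one_mul, Nat.choose_zero_right, Nat.cast_one,
    mul_one]
  exact congrArg (· + _) (sum_congr rfl fun s _ => by ring)

/-- The truncated subtraction in `r - s` is harmless: the binomial coefficient vanishes
for `s > r`. -/
def shiftedBinomialMatrix (n : ℕ) (x : R) : Matrix (Fin n) (Fin n) R :=
  of fun r s => (((r : ℕ) + 1).choose ((s : ℕ) + 1) : R) * x ^ ((r : ℕ) - s)

theorem shiftedBinomialMatrix_isLowerTriangular (n : ℕ) (x : R) :
    (shiftedBinomialMatrix n x).IsLowerTriangular := fun r s hrs => by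
  have hrs : (r : ℕ) + 1 < (s : ℕ) + 1 := Nat.succ_lt_succ hrs
  simp [shiftedBinomialMatrix, Nat.choose_eq_zero_of_lt hrs]

theorem det_shiftedBinomialMatrix (n : ℕ) (x : R) : (shiftedBinomialMatrix n x).det = 1 := by
  rw [det_of_isLowerTriangular _ (shiftedBinomialMatrix_isLowerTriangular n x)]
  exact prod_eq_one fun r _ => by simp [shiftedBinomialMatrix]

theorem of_add_pow_succ_sub_pow_succ_eq_mul {n : ℕ} (x : R) (a : Fin n → R) :
    (of fun (r c : Fin n) => (x + a c) ^ ((r : ℕ) + 1) - x ^ ((r : ℕ) + 1)) =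
      shiftedBinomialMatrix n x * of fun (s c : Fin n) => a c ^ ((s : ℕ) + 1) := by
  ext r c
  have hr : range ((r : ℕ) + 1) ⊆ range n := range_subset_range.2 r.2
  rw [of_apply, add_pow_succ_sub_pow_succ, mul_apply,
    sum_subset hr fun s _ hs => by
      rw [Nat.choose_eq_zero_of_lt (by simpa using hs), Nat.cast_zero, zero_mul, zero_mul],
    ← Fin.sum_univ_eq_sum_range
      (fun s => (((r : ℕ) + 1).choose (s + 1) : R) * x ^ ((r : ℕ) - s) * a c ^ (s + 1))]
  rfl

theorem det_of_pow_succ {n : ℕ} (a : Fin n → R) :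
    (of fun (s c : Fin n) => a c ^ ((s : ℕ) + 1)).det =
      (∏ c, a c) * ∏ k : Fin n, ∏ l ∈ Ioi k, (a l - a k) := by
  have h : (of fun (s c : Fin n) => a c ^ ((s : ℕ) + 1)) = (diagonal a * vandermonde a)ᵀ := by
    ext s c
    simp [vandermonde, diagonal_mul, pow_succ, mul_comm]
  rw [h, det_transpose, det_mul, det_diagonal, det_vandermonde]

end

theorem Finset.prod_filter_fst_lt_snd {α M : Type*} [Fintype α] [LinearOrder α]
    [LocallyFiniteOrderTop α] [CommMonoid M] (f : α × α → M) :
    ∏ p ∈ univ.filter (fun p : α × α => p.1 < p.2), f p = ∏ k, ∏ l ∈ Ioi k, f (k, l) := by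
  rw [prod_filter, Fintype.prod_prod_type]
  exact prod_congr rfl fun k _ => by rw [← filter_lt_eq_Ioi, prod_filter]

theorem stmt_14_general (n : ℕ) (i : Fin n → ℂ)
    (M : Matrix (Fin n) (Fin n) (Polynomial ℂ))
    (hM : ∀ r c : Fin n,
      M r c = (X + C (i c)) ^ ((r : ℕ) + 1) - X ^ ((r : ℕ) + 1)) :
    M.det = C ((∏ c, i c) *
      ∏ p ∈ Finset.univ.filter (fun p : Fin n × Fin n => p.1 < p.2),
        (i p.2 - i p.1)) := by
  have hM' : M = of fun (r c : Fin n) => (X + C (i c)) ^ ((r : ℕ) + 1) - X ^ ((r : ℕ) + 1) :=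
    ext hM
  rw [hM', of_add_pow_succ_sub_pow_succ_eq_mul, det_mul, det_shiftedBinomialMatrix, one_mul,
    det_of_pow_succ, prod_filter_fst_lt_snd]
  simp only [map_mul, map_prod, map_sub]

/-- The matrix M over ℂ[x] with entries M_{r,k} = (x + i_k)^r − x^r (1 ≤ r,k ≤ n) has
    determinant i_1 ⋯ i_n · ∏_{k<l} (i_l − i_k), a constant polynomial. -/
theorem stmt_14 (n : ℕ) (hn : 1 ≤ n) (i : Fin n → ℂ)
    (M : Matrix (Fin n) (Fin n) (Polynomial ℂ))
    (hM : ∀ r c : Fin n,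
      M r c = (X + C (i c)) ^ ((r : ℕ) + 1) - X ^ ((r : ℕ) + 1)) :
    M.det = C ((∏ c, i c) *
      ∏ p ∈ Finset.univ.filter (fun p : Fin n × Fin n => p.1 < p.2),
        (i p.2 - i p.1)) :=
  stmt_14_general n i M hM
end

section
/- If the complex numbers i_1, …, i_n are pairwise distinct and all nonzero, then the n×n matrix M over ℂ[x] with entries M_{r,k} = (x + i_k)^r − x^r (1 ≤ r, k ≤ n) is invertible as a matrix over ℂ[x], i.e. its determinant is a unit (a nonzero constant polynomial). -/
open Polynomial

/-!
Expanding `(x + i_k)^r - x^r` binomially factors `M = T(x) * V`, where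
`T(x)_{r,s} = binom(r, s) x^(r-s)` is lower unitriangular and `V_{r,k} = i_k^r` (indices from `1`).
So `det M = det V = (∏ i_k) * ∏_{k<l} (i_l - i_k)`: a constant, nonzero for distinct nonzero `i_k`.
-/

variable {R : Type*} [CommRing R]

theorem add_pow_succ_sub_pow_succ_eq_sum (a b : R) (m : ℕ) :
    (a + b) ^ (m + 1) - a ^ (m + 1) =
      ∑ s ∈ Finset.range (m + 1), ((m + 1).choose (s + 1) : R) * a ^ (m - s) * b ^ (s + 1) := by
  rw [add_comm a b, add_pow, Finset.sum_range_succ', add_sub_assoc]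
  simp only [pow_zero, one_mul, Nat.sub_zero, Nat.choose_zero_right, Nat.cast_one, mul_one,
    sub_self, add_zero]
  refine Finset.sum_congr rfl fun s _ => ?_
  rw [Nat.add_sub_add_right]
  ring

namespace Matrix

variable {n : ℕ}

def binomialShift (n : ℕ) (a : R) : Matrix (Fin n) (Fin n) R :=
  of fun r s => ((r + 1 : ℕ).choose (s + 1) : R) * a ^ ((r : ℕ) - s)

theorem det_binomialShift (a : R) : (binomialShift n a).det = 1 := by
  rw [det_of_isLowerTriangular _ fun r s (hrs : r < s) => by
    simp [binomialShift, Nat.choose_eq_zero_of_lt (Nat.succ_lt_succ hrs)]]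
  exact Finset.prod_eq_one fun r _ => by simp [binomialShift]

theorem of_add_pow_succ_sub_pow_succ (a : R) (v : Fin n → R) :
    of (fun r k : Fin n => (a + v k) ^ ((r : ℕ) + 1) - a ^ ((r : ℕ) + 1)) =
      binomialShift n a * of fun r k : Fin n => v k ^ ((r : ℕ) + 1) := by
  ext r k
  simp only [of_apply, add_pow_succ_sub_pow_succ_eq_sum, mul_apply, binomialShift]
  rw [Fin.sum_univ_eq_sum_range (fun s => ((r + 1 : ℕ).choose (s + 1) : R) * a ^ ((r : ℕ) - s)
      * v k ^ (s + 1))]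
  refine Finset.sum_subset (Finset.range_subset_range.2 r.2) fun s _ hs => ?_
  rw [Finset.mem_range, not_lt] at hs
  simp [Nat.choose_eq_zero_of_lt (Nat.succ_lt_succ hs)]

theorem det_of_pow_succ (v : Fin n → R) :
    (of fun r k : Fin n => v k ^ ((r : ℕ) + 1)).det = (∏ k, v k) * (vandermonde v).det := by
  rw [← det_mul_column, ← det_transpose]
  congr 1
  ext r k
  simp [vandermonde, pow_succ']

theorem det_of_pow_succ_ne_zero [IsDomain R] {v : Fin n → R} (hv : Function.Injective v)
    (hv₀ : ∀ k, v k ≠ 0) : (of fun r k : Fin n => v k ^ ((r : ℕ) + 1)).det ≠ 0 := by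
  rw [det_of_pow_succ]
  exact mul_ne_zero (Finset.prod_ne_zero_iff.2 fun k _ => hv₀ k) (det_vandermonde_ne_zero_iff.2 hv)

end Matrix

theorem stmt_15_general (n : ℕ) (i : Fin n → ℂ)
    (hinj : Function.Injective i) (hne : ∀ c : Fin n, i c ≠ 0)
    (M : Matrix (Fin n) (Fin n) (Polynomial ℂ))
    (hM : ∀ r c : Fin n,
      M r c = (X + C (i c)) ^ ((r : ℕ) + 1) - X ^ ((r : ℕ) + 1)) :
    IsUnit M ∧ IsUnit M.det := by
  set V : Matrix (Fin n) (Fin n) ℂ := .of fun r k => i k ^ ((r : ℕ) + 1)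
  have hM_eq : M = Matrix.binomialShift n X * .of fun r k => C (i k) ^ ((r : ℕ) + 1) := by
    rw [← Matrix.of_add_pow_succ_sub_pow_succ]
    exact Matrix.ext hM
  have hdet : M.det = C V.det := by
    rw [hM_eq, Matrix.det_mul, Matrix.det_binomialShift, one_mul, RingHom.map_det]
    congr 1
    ext r k
    simp [V]
  have hunit : IsUnit M.det := by
    rw [hdet]
    exact isUnit_C.2 (Matrix.det_of_pow_succ_ne_zero hinj hne).isUnit
  exact ⟨(Matrix.isUnit_iff_isUnit_det M).2 hunit, hunit⟩

/-- If i_1, …, i_n are pairwise distinct and nonzero, then M with entries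
    M_{r,k} = (x + i_k)^r − x^r is invertible over ℂ[x]: its determinant is a unit. -/
theorem stmt_15 (n : ℕ) (hn : 1 ≤ n) (i : Fin n → ℂ)
    (hinj : Function.Injective i) (hne : ∀ c : Fin n, i c ≠ 0)
    (M : Matrix (Fin n) (Fin n) (Polynomial ℂ))
    (hM : ∀ r c : Fin n,
      M r c = (X + C (i c)) ^ ((r : ℕ) + 1) - X ^ ((r : ℕ) + 1)) :
    IsUnit M ∧ IsUnit M.det :=
  stmt_15_general n i hinj hne M hM
end
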